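/- Let Q(y,x) ∈ (ℚ[y])⟦x⟧ be the Hirzebruch power series. If f ∈ (ℚ[y])⟦x⟧ is any formal power series whose constant coefficient is 1 and which satisfies, for every natural number n, that the coefficient of x^n in f^{n+1} equals Σ_{i=0}^{n} (−y)^i in ℚ[y], then f = Q(y,x). (This is the uniqueness statement by which a multiplicative characteristic class satisfying the normalization condition on projective spaces is identified as the Hirzebruch class td_{(y)}.) -/

import Mathlib

open PowerSeries

/-- The formal power series `(1 - e^{-t})/t = Σ_{n≥0} (-1)^n t^n/(n+1)!` in `ℚ⟦t⟧`. -/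
noncomputable def toddDenominator : PowerSeries ℚ :=
  PowerSeries.mk fun n => (-1) ^ n / (Nat.factorial (n + 1) : ℚ)

/-- The Todd power series `T(t) = ((1 - e^{-t})/t)⁻¹ ∈ ℚ⟦t⟧`. -/
noncomputable def toddSeries : PowerSeries ℚ := toddDenominator⁻¹

/-- The Hirzebruch power series `Q(y,x) = T(x(1+y)) - xy ∈ (ℚ[y])⟦x⟧`, where the
coefficient of `x^n` in `T(x(1+y))` is `(1+y)^n` times the coefficient of `t^n` in `T(t)`. -/
noncomputable def hirzebruchSeries : PowerSeries (Polynomial ℚ) :=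
  (PowerSeries.mk fun n =>
      (1 + Polynomial.X : Polynomial ℚ) ^ n * Polynomial.C (PowerSeries.coeff (R := ℚ) n toddSeries))
    - PowerSeries.X * PowerSeries.C (R := Polynomial ℚ) Polynomial.X

/-!
The normalization determines `f`: since `[x^n] f^(n+1) = (n+1) [x^n] f + (terms in lower
coefficients)`, the coefficients of `f` can be solved for one at a time in characteristic zero.

It remains to check that `Q` itself is normalized. With `g = x / Q`, Lagrange inversion expresses
`[x^n] Q^(n+1)` as the residue of `g^(-n-1) dx`, i.e. as `[t^n]` of `dx/dg` written as a series in
`t = g`. The defining identity `T(t) (1 - e^(-t)) = t` gives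
`Q (1 - e^(-(1+y)x)) = x (1 + y e^(-(1+y)x))`, from which `g' = (1 - g)(1 + y g)`, and
`1 / ((1 - t)(1 + y t)) = Σ_n (Σ_{i ≤ n} (-y)^i) t^n`.
-/

namespace PowerSeries

section CommSemiring

variable {R : Type*} [CommSemiring R]

@[simp]
theorem constantCoeff_rescale (a : R) (f : R⟦X⟧) :
    constantCoeff (rescale a f) = constantCoeff f := by
  rw [← coeff_zero_eq_constantCoeff_apply, coeff_rescale, pow_zero, one_mul,
    coeff_zero_eq_constantCoeff_apply]

theorem derivative_rescale (a : R) (f : R⟦X⟧) :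
    d⁄dX R (rescale a f) = C a * rescale a (d⁄dX R f) := by
  ext n
  simp [coeff_derivative, coeff_rescale, pow_succ]
  ring

end CommSemiring

variable {R : Type*} [CommRing R]

theorem eq_of_coeff_pow_succ_eq [IsAddTorsionFree R] {f g : R⟦X⟧}
    (hf : constantCoeff f = 1) (hg : constantCoeff g = 1)
    (h : ∀ n, coeff n (f ^ (n + 1)) = coeff n (g ^ (n + 1))) : f = g := by
  ext n
  induction n using Nat.strong_induction_on with
  | _ n ih =>
    obtain ⟨r, hr⟩ : X ^ n ∣ f - g :=
      X_pow_dvd_iff.mpr fun m hm => by rw [map_sub, ih m hm, sub_self]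
    have hS : constantCoeff (∑ i ∈ Finset.range (n + 1), f ^ i * g ^ (n - i)) = (n + 1 : ℕ) := by
      simp [hf, hg]
    have hpow : f ^ (n + 1) - g ^ (n + 1)
        = X ^ n * (r * ∑ i ∈ Finset.range (n + 1), f ^ i * g ^ (n - i)) := by
      rw [← mul_assoc, ← hr, mul_comm, ← (Commute.all f g).geom_sum₂_mul]
      simp
    have hcoeff : coeff n (f - g) = constantCoeff r := by
      simpa [hr] using coeff_X_pow_mul r n 0
    have key := congrArg (coeff n) hpow
    rw [map_sub, h n, sub_self] at key
    rw [coeff_X_pow_mul', if_pos le_rfl, Nat.sub_self, coeff_zero_eq_constantCoeff_apply,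
      map_mul, hS] at key
    have hzero : (n + 1) • constantCoeff r = 0 := by
      rw [nsmul_eq_mul, mul_comm, ← key]
    rw [← sub_eq_zero, ← map_sub, hcoeff]
    exact (smul_eq_zero.mp hzero).resolve_left n.succ_ne_zero

theorem coeff_derivative_mul_pow [IsAddTorsionFree R] (Q : R⟦X⟧) (k : ℕ) :
    coeff k (d⁄dX R Q * Q ^ k) = coeff (k + 1) (Q ^ (k + 1)) := by
  have h := coeff_derivative (Q ^ (k + 1)) k
  rw [derivative_pow, Nat.add_sub_cancel, ← map_natCast (C (R := R)), mul_assoc, coeff_C_mul,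
    mul_comm (Q ^ k)] at h
  apply nsmul_right_injective k.succ_ne_zero
  simp only [nsmul_eq_mul]
  rw [h]
  push_cast
  ring

/-- `[x^n] (g^m g' Q^(n+1))` is the residue of `g^(m-n-1) dg`, since `g^(n+1) Q^(n+1) = x^(n+1)`. -/
theorem coeff_pow_mul_derivative_mul_pow_succ [IsAddTorsionFree R] {g Q : R⟦X⟧}
    (hgQ : g * Q = X) (hQ : constantCoeff Q = 1) {m n : ℕ} (hmn : m ≤ n) :
    coeff n (g ^ m * d⁄dX R g * Q ^ (n + 1)) = if m = n then 1 else 0 := by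
  have hg : constantCoeff g = 0 := by simpa [hQ] using congrArg constantCoeff hgQ
  have hderiv : d⁄dX R g * Q = 1 - g * d⁄dX R Q := by
    have := congrArg (d⁄dX R) hgQ
    rw [Derivation.leibniz, derivative_X, smul_eq_mul, smul_eq_mul] at this
    linear_combination this
  obtain ⟨j, rfl⟩ := Nat.exists_eq_add_of_le hmn
  have hX : g ^ m * d⁄dX R g * Q ^ (m + j + 1) = X ^ m * (Q ^ j - g * d⁄dX R Q * Q ^ j) := by
    rw [← hgQ, mul_pow]
    linear_combination (g ^ m * Q ^ m * Q ^ j) * hderiv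
  rcases j with _ | k
  · simp [hX, hg, coeff_X_pow_mul']
  · have hgQ' : g * d⁄dX R Q * Q ^ (k + 1) = X * (d⁄dX R Q * Q ^ k) := by
      rw [← hgQ]; ring
    rw [hX, hgQ', if_neg (by omega), add_comm m, coeff_X_pow_mul, map_sub, coeff_succ_X_mul,
      coeff_derivative_mul_pow, sub_self]

/-- Lagrange inversion: `Σ_{m ≤ n} c_m t^m` is `dx/dg` modulo `t^(n+1)`, expanded in `t = g`. -/
theorem coeff_pow_succ_eq_of_dvd [IsAddTorsionFree R] {g Q : R⟦X⟧}
    (hgQ : g * Q = X) (hQ : constantCoeff Q = 1) (c : ℕ → R) {n : ℕ}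
    (h : g ^ (n + 1) ∣ 1 - d⁄dX R g * ∑ m ∈ Finset.range (n + 1), C (c m) * g ^ m) :
    coeff n (Q ^ (n + 1)) = c n := by
  obtain ⟨r, hr⟩ := h
  have hQpow : Q ^ (n + 1)
      = ∑ m ∈ Finset.range (n + 1), C (c m) * (g ^ m * d⁄dX R g * Q ^ (n + 1))
        + X ^ (n + 1) * r := by
    have hsum : ∑ m ∈ Finset.range (n + 1), C (c m) * (g ^ m * d⁄dX R g * Q ^ (n + 1))
        = d⁄dX R g * (∑ m ∈ Finset.range (n + 1), C (c m) * g ^ m) * Q ^ (n + 1) := by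
      rw [Finset.mul_sum, Finset.sum_mul]
      exact Finset.sum_congr rfl fun _ _ => by ring
    rw [hsum, ← hgQ, mul_pow]
    linear_combination Q ^ (n + 1) * hr
  rw [hQpow, map_add, map_sum, coeff_X_pow_mul', if_neg (by omega), add_zero]
  simp_rw [coeff_C_mul]
  rw [Finset.sum_congr rfl fun m hm => by
    rw [coeff_pow_mul_derivative_mul_pow_succ hgQ hQ (Finset.mem_range_succ_iff.mp hm)]]
  simp

end PowerSeries

theorem one_sub_mul_one_add_mul_mul_sum_geom_sum {A : Type*} [CommRing A] (y t : A) (N : ℕ) :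
    (1 - t) * (1 + y * t) *
        ∑ m ∈ Finset.range (N + 1), (∑ i ∈ Finset.range (m + 1), (-y) ^ i) * t ^ m
      = 1 - t ^ (N + 1) *
        ((-y) ^ (N + 1) + (∑ i ∈ Finset.range (N + 1), (-y) ^ i) * (1 + y * t)) := by
  induction N with
  | zero => simp; ring
  | succ N ih =>
    rw [Finset.sum_range_succ, mul_add, ih, Finset.sum_range_succ _ (N + 1)]
    ring

theorem constantCoeff_toddDenominator : constantCoeff toddDenominator = 1 := by
  simp [toddDenominator, ← coeff_zero_eq_constantCoeff_apply]

theorem toddSeries_mul_toddDenominator : toddSeries * toddDenominator = 1 :=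
  PowerSeries.inv_mul_cancel _ (by simp [constantCoeff_toddDenominator])

theorem X_mul_toddDenominator : X * toddDenominator = 1 - rescale (-1) (exp ℚ) := by
  ext (_ | n)
  · simp
  · simp [coeff_succ_X_mul, toddDenominator, coeff_rescale, coeff_exp, pow_succ,
      Nat.factorial_succ]
    rw [div_eq_mul_inv, mul_inv]
    ring

theorem hirzebruchSeries_eq : hirzebruchSeries
    = rescale (1 + Polynomial.X) (map Polynomial.C toddSeries) - X * C Polynomial.X :=
  rfl

theorem constantCoeff_hirzebruchSeries : constantCoeff hirzebruchSeries = 1 := by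
  rw [← coeff_zero_eq_constantCoeff_apply, hirzebruchSeries, map_sub, coeff_mk]
  simp [toddSeries, constantCoeff_toddDenominator]

theorem hirzebruchSeries_mul_one_sub_exp :
    hirzebruchSeries * (1 - rescale (-(1 + Polynomial.X)) (exp (Polynomial ℚ)))
      = X * (1 + C Polynomial.X * rescale (-(1 + Polynomial.X)) (exp (Polynomial ℚ))) := by
  set Φ : ℚ⟦X⟧ →+* (Polynomial ℚ)⟦X⟧ := (rescale (1 + Polynomial.X)).comp (map Polynomial.C)
  have hT : Φ toddSeries * Φ toddDenominator = 1 := by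
    rw [← map_mul, toddSeries_mul_toddDenominator, map_one]
  have hE : rescale (-(1 + Polynomial.X)) (exp (Polynomial ℚ))
      = 1 - (1 + C Polynomial.X) * X * Φ toddDenominator := by
    have := congrArg Φ X_mul_toddDenominator
    simp only [Φ, RingHom.comp_apply, map_mul, map_sub, map_one, map_X, rescale_X, map_add] at this
    rw [← rescale_map, map_exp, rescale_rescale, map_neg, map_one, neg_one_mul] at this
    linear_combination this
  rw [hirzebruchSeries_eq, hE]
  linear_combination (1 + C Polynomial.X) * X * hT

theorem derivative_eq_of_mul_hirzebruchSeries_eq_X {g : (Polynomial ℚ)⟦X⟧}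
    (hg : g * hirzebruchSeries = X) :
    d⁄dX (Polynomial ℚ) g = (1 - g) * (1 + C Polynomial.X * g) := by
  have hQE := hirzebruchSeries_mul_one_sub_exp
  set E := rescale (-(1 + Polynomial.X)) (exp (Polynomial ℚ)) with hE
  have hgE : g * (1 + C Polynomial.X * E) = 1 - E := by
    apply X_pow_mul_cancel (k := 1)
    rw [pow_one]
    linear_combination (1 - E) * hg - g * hQE
  have hdE : d⁄dX _ E = -(1 + C Polynomial.X) * E := by
    rw [hE, derivative_rescale, derivative_exp, map_neg, map_add, map_one]
  have hdgE := congrArg (d⁄dX (Polynomial ℚ)) hgE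
  simp only [Derivation.leibniz, map_add, map_sub, Derivation.map_one_eq_zero, derivative_C,
    hdE, smul_eq_mul] at hdgE
  have hne : 1 + C Polynomial.X * E ≠ 0 := by
    intro h
    have h0 := congrArg (fun f => Polynomial.coeff (constantCoeff f) 1) h
    simp [hE, Polynomial.coeff_one] at h0
  apply mul_right_cancel₀ hne
  linear_combination hdgE + (1 + C Polynomial.X * g) * hgE

theorem coeff_hirzebruchSeries_pow_succ (n : ℕ) :
    coeff n (hirzebruchSeries ^ (n + 1))
      = ∑ i ∈ Finset.range (n + 1), (-Polynomial.X : Polynomial ℚ) ^ i := by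
  have hg : X * hirzebruchSeries.invOfUnit 1 * hirzebruchSeries = X := by
    rw [mul_assoc, mul_comm (invOfUnit _ _),
      mul_invOfUnit _ _ (by simp [constantCoeff_hirzebruchSeries]), mul_one]
  refine coeff_pow_succ_eq_of_dvd hg constantCoeff_hirzebruchSeries
    (fun m => ∑ i ∈ Finset.range (m + 1), (-Polynomial.X) ^ i) ?_
  have hgeom := one_sub_mul_one_add_mul_mul_sum_geom_sum (C Polynomial.X)
    (X * hirzebruchSeries.invOfUnit 1) n
  simp only [map_sum, map_pow, map_neg]
  rw [derivative_eq_of_mul_hirzebruchSeries_eq_X hg, hgeom, sub_sub_cancel]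
  exact dvd_mul_right _ _

/-- Uniqueness: any formal power series `f ∈ (ℚ[y])⟦x⟧` with constant coefficient `1` such that
for every `n` the coefficient of `x^n` in `f^{n+1}` equals `Σ_{i=0}^{n} (-y)^i` is the
Hirzebruch power series `Q(y,x)`. -/
theorem hirzebruchSeries_unique (f : PowerSeries (Polynomial ℚ))
    (h1 : PowerSeries.constantCoeff (R := Polynomial ℚ) f = 1)
    (h2 : ∀ n : ℕ, PowerSeries.coeff (R := Polynomial ℚ) n (f ^ (n + 1))
      = ∑ i ∈ Finset.range (n + 1), (-Polynomial.X : Polynomial ℚ) ^ i) :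
    f = hirzebruchSeries :=
  eq_of_coeff_pow_succ_eq h1 constantCoeff_hirzebruchSeries fun n =>
    (h2 n).trans (coeff_hirzebruchSeries_pow_succ n).symm
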